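/- arXiv:1606.01687 — 3 statements merged into one kernel-verified Lean document; each statement's English description precedes it below -/
import Mathlib

section
/- Let H be a Hilbert space, L a finite-dimensional subspace of H with orthonormal basis e₁, …, e_m, and P_L the orthogonal projection onto L. Then for any g₁, …, g_k ∈ H, G((I−P_L)g₁, …, (I−P_L)g_k) = G(g₁, …, g_k, e₁, …, e_m). -/
noncomputable def gram {H : Type*} [NormedAddCommGroup H] [InnerProductSpace ℝ H]
    {n : ℕ} (v : Fin n → H) : ℝ :=
  (Matrix.of fun i j => (inner ℝ (v i) (v j) : ℝ)).det

/-!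
With `B = (⟪gᵢ, e_l⟫)`, the Gram matrix of `(g, e)` has block form `[[G(g), B], [Bᴴ, 1]]`
because `e` is orthonormal, so its determinant is that of the Schur complement `G(g) - B Bᴴ`.
On the other side, `P_L x = ∑ ⟪e_l, x⟫ e_l` and `(I - P_L) x ⊥ L` give
`⟪(I - P_L) gᵢ, (I - P_L) gⱼ⟫ = ⟪gᵢ, gⱼ⟫ - ∑ ⟪gᵢ, e_l⟫ ⟪e_l, gⱼ⟫`,
which is the same matrix.
-/

open scoped InnerProductSpace

section

variable {𝕜 E ι ι' : Type*} [RCLike 𝕜] [NormedAddCommGroup E] [InnerProductSpace 𝕜 E]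

theorem Submodule.inner_sub_starProjection_sub_starProjection (K : Submodule 𝕜 E)
    [K.HasOrthogonalProjection] (x y : E) :
    ⟪x - K.starProjection x, y - K.starProjection y⟫_𝕜 =
      ⟪x, y⟫_𝕜 - ⟪K.starProjection x, y⟫_𝕜 := by
  have hperp : ⟪x - K.starProjection x, K.starProjection y⟫_𝕜 = 0 :=
    K.inner_left_of_mem_orthogonal (K.starProjection_apply_mem y)
      (K.sub_starProjection_mem_orthogonal x)
  rw [inner_sub_right, hperp, sub_zero, inner_sub_left]

theorem Orthonormal.starProjection_eq_sum [Fintype ι] {e : ι → E} (he : Orthonormal 𝕜 e)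
    {K : Submodule 𝕜 E} [K.HasOrthogonalProjection] (hK : K = Submodule.span 𝕜 (Set.range e))
    (x : E) : K.starProjection x = ∑ l, ⟪e l, x⟫_𝕜 • e l := by
  subst hK
  refine Submodule.eq_starProjection_of_mem_of_inner_eq_zero
    (Submodule.sum_mem _ fun l _ => Submodule.smul_mem _ _ (Submodule.subset_span ⟨l, rfl⟩))
    fun w hw => ?_
  obtain ⟨c, rfl⟩ := (Submodule.mem_span_range_iff_exists_fun 𝕜).mp hw
  simp [inner_sum, inner_smul_right, inner_sub_left, he.inner_left_fintype]

theorem Orthonormal.inner_starProjection_left [Fintype ι] {e : ι → E} (he : Orthonormal 𝕜 e)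
    {K : Submodule 𝕜 E} [K.HasOrthogonalProjection] (hK : K = Submodule.span 𝕜 (Set.range e))
    (x y : E) : ⟪K.starProjection x, y⟫_𝕜 = ∑ l, ⟪x, e l⟫_𝕜 * ⟪e l, y⟫_𝕜 := by
  simp [he.starProjection_eq_sum hK, sum_inner, inner_smul_left]

namespace Matrix

variable {k m : ℕ}

theorem submatrix_gram_append (g : Fin k → E) (e : Fin m → E) :
    (gram 𝕜 (Fin.append g e)).submatrix finSumFinEquiv finSumFinEquiv =
      fromBlocks (gram 𝕜 g) (of fun i l => ⟪g i, e l⟫_𝕜)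
        (of fun l j => ⟪e l, g j⟫_𝕜) (gram 𝕜 e) := by
  ext (i | i) (j | j) <;> simp

theorem det_gram_append_orthonormal {e : Fin m → E} (he : Orthonormal 𝕜 e)
    (g : Fin k → E) :
    (gram 𝕜 (Fin.append g e)).det =
      (gram 𝕜 g - of fun i j => ∑ l, ⟪g i, e l⟫_𝕜 * ⟪e l, g j⟫_𝕜).det := by
  rw [← det_submatrix_equiv_self finSumFinEquiv, submatrix_gram_append,
    gram_eq_one_iff_orthonormal.mpr he, det_fromBlocks_one₂₂]
  rfl

theorem gram_sub_starProjection [Fintype ι] {e : ι → E} (he : Orthonormal 𝕜 e)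
    {K : Submodule 𝕜 E} [K.HasOrthogonalProjection] (hK : K = Submodule.span 𝕜 (Set.range e))
    (g : ι' → E) :
    gram 𝕜 (fun i => g i - K.starProjection (g i)) =
      gram 𝕜 g - of fun i j => ∑ l, ⟪g i, e l⟫_𝕜 * ⟪e l, g j⟫_𝕜 := by
  ext i j
  simp [K.inner_sub_starProjection_sub_starProjection, he.inner_starProjection_left hK]

end Matrix

end

theorem gram_sub_proj_eq_general {H : Type*} [NormedAddCommGroup H] [InnerProductSpace ℝ H]
    {m : ℕ} (e : Fin m → H) (he : Orthonormal ℝ e)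
    (L : Submodule ℝ H) [FiniteDimensional ℝ L] (hL : L = Submodule.span ℝ (Set.range e))
    {k : ℕ} (g : Fin k → H) :
    gram (fun i => g i - (L.orthogonalProjection (g i) : H)) = gram (Fin.append g e) := by
  change (Matrix.gram ℝ fun i => g i - L.starProjection (g i)).det = (Matrix.gram ℝ _).det
  rw [Matrix.det_gram_append_orthonormal he, Matrix.gram_sub_starProjection he hL]

/-- If `L` is a finite-dimensional subspace of a Hilbert space `H` with orthonormal basis
`e₁, …, e_m` and `P_L` is the orthogonal projection onto `L`, then for any `g₁, …, g_k ∈ H`,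
`G((I−P_L)g₁, …, (I−P_L)g_k) = G(g₁, …, g_k, e₁, …, e_m)`. -/
theorem gram_sub_proj_eq {H : Type*} [NormedAddCommGroup H] [InnerProductSpace ℝ H]
    [CompleteSpace H] {m : ℕ} (e : Fin m → H) (he : Orthonormal ℝ e)
    (L : Submodule ℝ H) [FiniteDimensional ℝ L] (hL : L = Submodule.span ℝ (Set.range e))
    {k : ℕ} (g : Fin k → H) :
    gram (fun i => g i - (L.orthogonalProjection (g i) : H)) = gram (Fin.append g e) :=
  gram_sub_proj_eq_general e he L hL g
end

section
/- Fix n ∈ ℕ. The set M of functions in L²([0,1]) that admit a representative which is a step function with at most n jumps (i.e., piecewise constant on at most n+1 intervals) is a closed subset of L²([0,1]). -/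
open MeasureTheory

/-- Lebesgue measure restricted to `[0,1]`, whose `L²` space is `L²([0,1])`. -/
noncomputable def mu01 : Measure ℝ := volume.restrict (Set.Icc (0 : ℝ) 1)

/-- `g : ℝ → ℝ` is a step function on `[0,1]` with at most `n` jumps, i.e. it is
constant on each of at most `n+1` consecutive intervals partitioning `[0,1]`. -/
def IsStepAtMostJumps (n : ℕ) (g : ℝ → ℝ) : Prop :=
  ∃ (t : Fin (n + 2) → ℝ) (c : Fin (n + 1) → ℝ),
    Monotone t ∧ t 0 = 0 ∧ t (Fin.last (n + 1)) = 1 ∧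
    ∀ i : Fin (n + 1), ∀ x ∈ Set.Ioo (t i.castSucc) (t i.succ), g x = c i

/-!
Let `f_k → f` in `L²` with each `f_k` a.e. equal to a step function `g_k`. Along a subsequence
`f_k → f` a.e., and, since the vectors of breakpoints lie in a compact subset of `ℝ^(n+2)`, along a
further subsequence they converge to a partition `T` of `[0,1]`. Every point of an open interval of
`T` lies, for large `k`, inside the corresponding interval of the `k`-th partition, so there
`g_k` equals its `i`-th value; hence the pointwise limit `lim_k g_k` is a step function with
breakpoints `T`, and it equals `f` wherever `g_k → f`, which is almost everywhere.
-/

open Filter Topology Set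

lemma Filter.EventuallyEq.limUnder_eq {α β : Type*} [TopologicalSpace β] [Nonempty β]
    {l : Filter α} {u v : α → β} (h : u =ᶠ[l] v) : limUnder l u = limUnder l v := by
  rw [limUnder, limUnder, Filter.map_congr h]

lemma isCompact_setOf_monotone_zero_last (n : ℕ) :
    IsCompact {t : Fin (n + 2) → ℝ | Monotone t ∧ t 0 = 0 ∧ t (Fin.last (n + 1)) = 1} := by
  refine (isCompact_univ_pi fun _ => isCompact_Icc (a := (0 : ℝ)) (b := 1)).of_isClosed_subset
    (isClosed_monotone.inter ((isClosed_eq (continuous_apply 0) continuous_const).inter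
      (isClosed_eq (continuous_apply _) continuous_const))) ?_
  rintro t ⟨ht, h0, h1⟩ i -
  exact ⟨h0 ▸ ht (Fin.zero_le i), h1 ▸ ht (Fin.le_last i)⟩

lemma eventuallyEq_of_tendsto_of_mem_Ioo {ι : Type*} {l : Filter ι} {n : ℕ}
    {t : ι → Fin (n + 2) → ℝ} {c : ι → Fin (n + 1) → ℝ} {g : ι → ℝ → ℝ} {T : Fin (n + 2) → ℝ}
    (hT : Tendsto t l (𝓝 T))
    (hg : ∀ k i, ∀ x ∈ Ioo (t k i.castSucc) (t k i.succ), g k x = c k i)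
    {i : Fin (n + 1)} {x : ℝ} (hx : x ∈ Ioo (T i.castSucc) (T i.succ)) :
    (fun k => g k x) =ᶠ[l] fun k => c k i := by
  rw [tendsto_pi_nhds] at hT
  filter_upwards [(hT _).eventually_lt_const hx.1, (hT _).eventually_const_lt hx.2] with k h₁ h₂
  exact hg k i x ⟨h₁, h₂⟩

theorem IsStepAtMostJumps.exists_subseq_limUnder {n : ℕ} {g : ℕ → ℝ → ℝ}
    (hg : ∀ k, IsStepAtMostJumps n (g k)) :
    ∃ φ : ℕ → ℕ, StrictMono φ ∧
      IsStepAtMostJumps n fun x => limUnder atTop fun k => g (φ k) x := by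
  choose t c ht h0 h1 hstep using hg
  obtain ⟨T, ⟨hT, hT0, hT1⟩, φ, hφ, hlim⟩ :=
    (isCompact_setOf_monotone_zero_last n).tendsto_subseq fun k => ⟨ht k, h0 k, h1 k⟩
  exact ⟨φ, hφ, T, fun i => limUnder atTop fun k => c (φ k) i, hT, hT0, hT1, fun i x hx =>
    (eventuallyEq_of_tendsto_of_mem_Ioo hlim (fun k => hstep (φ k)) hx).limUnder_eq⟩

/-- The set of elements of `L²([0,1])` admitting a representative which is a step function
with at most `n` jumps is closed in `L²([0,1])`. -/
theorem isClosed_step_functions (n : ℕ) :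
    IsClosed {f : Lp ℝ 2 mu01 |
      ∃ g : ℝ → ℝ, IsStepAtMostJumps n g ∧ (f : ℝ → ℝ) =ᵐ[mu01] g} := by
  refine IsSeqClosed.isClosed fun F f hF hFf => ?_
  choose g hg hFg using hF
  obtain ⟨ns, -, hae⟩ := (tendstoInMeasure_of_tendsto_Lp hFf).exists_seq_tendsto_ae
  obtain ⟨φ, hφ, hstep⟩ := IsStepAtMostJumps.exists_subseq_limUnder fun k => hg (ns k)
  refine ⟨_, hstep, ?_⟩
  filter_upwards [ae_all_iff.mpr hFg, hae] with x hFgx hx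
  exact ((hx.comp hφ.tendsto_atTop).congr fun k => hFgx _).limUnder_eq.symm
end

section
/- Let A be a bounded linear operator on a Hilbert space H with finite-dimensional kernel, such that the restriction of A to (ker A)^⊥ has a bounded inverse Ã⁻¹ : range(A) → (ker A)^⊥. Let P be the orthogonal projection onto ker A. Then for any e₁, …, eₙ ∈ H, G(Ae₁, …, Aeₙ) = G(A(I−P)e₁, …, A(I−P)eₙ) ≥ (1/‖Ã⁻¹‖^{2n}) · G((I−P)e₁, …, (I−P)eₙ). -/
/-! Since `P eᵢ ∈ ker A`, `A eᵢ = A (I - P) eᵢ = Ã ((I - P) eᵢ)`. Applying the bounded map `Ã⁻¹`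
to the vectors `A eᵢ` scales their Gram matrix, in the Loewner order, by at most `‖Ã⁻¹‖²`, and the
determinant is monotone on positive semidefinite matrices. -/

open scoped MatrixOrder

namespace Matrix

variable {n : Type*} [Fintype n] [DecidableEq n]

theorem PosSemidef.det_le_one {B : Matrix n n ℝ} (hB : B.PosSemidef) (h1 : (1 - B).PosSemidef) :
    B.det ≤ 1 := by
  rw [hB.1.det_eq_prod_eigenvalues]
  refine Finset.prod_le_one (fun i _ => hB.eigenvalues_nonneg i) fun i _ => ?_
  have hspec : 1 - hB.1.eigenvalues i ∈ spectrum ℝ (1 - B) := by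
    rw [← map_one (algebraMap ℝ (Matrix n n ℝ)), ← spectrum.singleton_sub_eq]
    exact Set.sub_mem_sub rfl (hB.1.eigenvalues_mem_spectrum_real i)
  simpa using (posSemidef_iff_isHermitian_and_spectrum_nonneg.mp h1).2 hspec

theorem PosSemidef.det_le_det {M N : Matrix n n ℝ} (hM : M.PosSemidef)
    (hMN : (N - M).PosSemidef) : M.det ≤ N.det := by
  have hN : N.PosSemidef := by simpa using hM.add hMN
  by_cases hN0 : N.det = 0
  · obtain ⟨x, hx0, hNx⟩ := exists_mulVec_eq_zero_iff.mpr hN0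
    have hMx : star x ⬝ᵥ M *ᵥ x = 0 := by
      refine le_antisymm ?_ (hM.dotProduct_mulVec_nonneg x)
      simpa [sub_mulVec, hNx] using hMN.dotProduct_mulVec_nonneg x
    rw [exists_mulVec_eq_zero_iff.mp ⟨x, hx0, (hM.dotProduct_mulVec_zero_iff x).mp hMx⟩, hN0]
  · -- conjugate by `N^{-1/2}` to reduce to `N = 1`
    set Q := CFC.sqrt N
    have hQQ : Q * Q = N := CFC.sqrt_mul_sqrt_self N hN.nonneg
    have hQdet : Q.det * Q.det = N.det := by rw [← det_mul, hQQ]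
    have hQ0 : Q.det ≠ 0 := fun h => hN0 (by rw [← hQdet, h, zero_mul])
    have hQ : IsUnit Q.det := hQ0.isUnit
    have hQinv : (Q⁻¹)ᴴ = Q⁻¹ := (nonneg_iff_posSemidef.mp (CFC.sqrt_nonneg N)).1.inv.eq
    have hB := hM.conjTranspose_mul_mul_same Q⁻¹
    have h1B := hMN.conjTranspose_mul_mul_same Q⁻¹
    have hQNQ : Q⁻¹ * N * Q⁻¹ = 1 := by
      rw [← hQQ, ← mul_assoc, nonsing_inv_mul Q hQ, one_mul, mul_nonsing_inv Q hQ]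
    rw [hQinv, mul_sub, sub_mul, hQNQ] at h1B
    rw [hQinv] at hB
    have := hB.det_le_one h1B
    rw [det_mul, det_mul, det_nonsing_inv, Ring.inverse_eq_inv'] at this
    have hNpos : 0 < N.det := lt_of_le_of_ne hN.det_nonneg (Ne.symm hN0)
    calc M.det = (Q.det⁻¹ * M.det * Q.det⁻¹) * N.det := by rw [← hQdet]; field_simp
      _ ≤ N.det := mul_le_of_le_one_left hNpos.le this

end Matrix

section Gram

variable {E F : Type*} [NormedAddCommGroup E] [InnerProductSpace ℝ E]
  [NormedAddCommGroup F] [InnerProductSpace ℝ F] {n : ℕ}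

theorem gram_nonneg (v : Fin n → E) : 0 ≤ gram v :=
  (Matrix.posSemidef_gram ℝ v).det_nonneg

theorem gram_coe (p : Submodule ℝ E) (v : Fin n → p) : gram (fun i => (v i : E)) = gram v :=
  rfl

theorem gram_comp_le (S : E →L[ℝ] F) (v : Fin n → E) :
    gram (S ∘ v) ≤ ‖S‖ ^ (2 * n) * gram v := by
  have h := (Matrix.posSemidef_gram ℝ (S ∘ v)).det_le_det
    (Matrix.posSemidef_opNorm_smul_gram_sub_gram v S)
  rwa [Matrix.det_smul, Fintype.card_fin, ← pow_mul] at h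

end Gram

theorem gram_ker_restriction_general {H : Type*} [NormedAddCommGroup H] [InnerProductSpace ℝ H]
    (A : H →L[ℝ] H)
    (K : Submodule ℝ H) [FiniteDimensional ℝ K] (hK : K = LinearMap.ker (A : H →ₗ[ℝ] H))
    (R : Submodule ℝ H)
    (e : (Kᗮ : Submodule ℝ H) ≃L[ℝ] R) (he : ∀ x : (Kᗮ : Submodule ℝ H), (e x : H) = A x)
    {n : ℕ} (v : Fin n → H) :
    gram (fun i => A (v i)) =
        gram (fun i => A (v i - (K.orthogonalProjectionOnto (v i) : H))) ∧
      gram (fun i => A (v i)) ≥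
        (1 / ‖(e.symm : R →L[ℝ] (Kᗮ : Submodule ℝ H))‖ ^ (2 * n)) *
          gram (fun i => v i - (K.orthogonalProjectionOnto (v i) : H)) := by
  have hAP (x : H) : A (x - K.orthogonalProjectionOnto x) = A x := by
    have hPx : (K.orthogonalProjectionOnto x : H) ∈ LinearMap.ker (A : H →ₗ[ℝ] H) :=
      hK ▸ (K.orthogonalProjectionOnto x).2
    rw [map_sub, show A (K.orthogonalProjectionOnto x) = 0 from hPx, sub_zero]
  let w : Fin n → (Kᗮ : Submodule ℝ H) := fun i =>
    ⟨v i - K.orthogonalProjectionOnto (v i), K.sub_starProjection_mem_orthogonal (v i)⟩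
  have hew (i : Fin n) : (e (w i) : H) = A (v i) := (he (w i)).trans (hAP (v i))
  refine ⟨by simp only [hAP], ?_⟩
  let Ainv : R →L[ℝ] (Kᗮ : Submodule ℝ H) := e.symm
  have key : gram (fun i => (w i : H)) ≤ ‖Ainv‖ ^ (2 * n) * gram (fun i => A (v i)) := by
    calc gram (fun i => (w i : H)) = gram (Ainv ∘ (e ∘ w)) := by
          rw [gram_coe]; congr 1; ext1 i; simp [Ainv]
      _ ≤ _ := gram_comp_le _ _
      _ = _ := by rw [← gram_coe]; simp only [Function.comp_apply, hew]
  rw [ge_iff_le, one_div, ← div_eq_inv_mul]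
  exact div_le_of_le_mul₀ (by positivity) (gram_nonneg _) (key.trans_eq (mul_comm _ _))

/-- Let `A` be a bounded operator on a Hilbert space with finite-dimensional kernel `K`,
whose restriction to `Kᗮ` is a continuous linear equivalence `e` onto the range `R` of `A`
(so `e.symm` is the bounded inverse `Ã⁻¹ : R → Kᗮ`). With `P` the orthogonal projection
onto `K`, for any `e₁,…,eₙ`:
`G(Ae₁,…,Aeₙ) = G(A(I−P)e₁,…,A(I−P)eₙ) ≥ (1/‖Ã⁻¹‖^{2n}) G((I−P)e₁,…,(I−P)eₙ)`. -/
theorem gram_ker_restriction {H : Type*} [NormedAddCommGroup H] [InnerProductSpace ℝ H]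
    [CompleteSpace H] (A : H →L[ℝ] H)
    (K : Submodule ℝ H) [FiniteDimensional ℝ K] (hK : K = LinearMap.ker (A : H →ₗ[ℝ] H))
    (R : Submodule ℝ H) (hR : R = LinearMap.range (A : H →ₗ[ℝ] H))
    (e : (Kᗮ : Submodule ℝ H) ≃L[ℝ] R) (he : ∀ x : (Kᗮ : Submodule ℝ H), (e x : H) = A x)
    {n : ℕ} (v : Fin n → H) :
    gram (fun i => A (v i)) =
        gram (fun i => A (v i - (K.orthogonalProjectionOnto (v i) : H))) ∧
      gram (fun i => A (v i)) ≥
        (1 / ‖(e.symm : R →L[ℝ] (Kᗮ : Submodule ℝ H))‖ ^ (2 * n)) *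
          gram (fun i => v i - (K.orthogonalProjectionOnto (v i) : H)) :=
  gram_ker_restriction_general A K hK R e he v
end
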